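/- Let X, Y be real n×k matrices and suppose XᵀY = U·D·Vᵀ is a singular value decomposition with U, V ∈ O(k) and D diagonal with D_{ii} > 0 for 1 ≤ i ≤ l and D_{ii} = 0 for l < i ≤ k; set r = k − l. Then an orthogonal matrix R ∈ O(k) satisfies Xᵀ·Y·R = (Xᵀ·Y·Yᵀ·X)^{1/2} if and only if R = V · [[I_l, 0],[0, R_r]] · Uᵀ for some R_r ∈ O(r), where [[I_l, 0],[0, R_r]] denotes the block-diagonal k×k matrix with blocks I_l and R_r. -/

import Mathlib

open Matrix

/-- The matrix `Xᵀ * Y * Yᵀ * X` is positive semidefinite. -/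
theorem xtyytx_posSemidef {n k : ℕ} (X Y : Matrix (Fin n) (Fin k) ℝ) :
    (Xᵀ * Y * Yᵀ * X).PosSemidef := by
  have h := Matrix.posSemidef_conjTranspose_mul_self (Yᵀ * X)
  simpa [Matrix.conjTranspose_mul, Matrix.mul_assoc] using h

/-- `(Xᵀ Y Yᵀ X)^{1/2}`: the unique symmetric positive semidefinite square root of
`Xᵀ * Y * Yᵀ * X`. -/
noncomputable def bwSqrt {n k : ℕ} (X Y : Matrix (Fin n) (Fin k) ℝ) :
    Matrix (Fin k) (Fin k) ℝ :=
  (xtyytx_posSemidef X Y).1.eigenvectorUnitary.1 *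
    diagonal (Real.sqrt ∘ (xtyytx_posSemidef X Y).1.eigenvalues) *
    (star (xtyytx_posSemidef X Y).1.eigenvectorUnitary : Matrix (Fin k) (Fin k) ℝ)

/-- The block-diagonal `k × k` matrix `[[I_l, 0], [0, Rr]]` built from an
`(k−l) × (k−l)` block `Rr`, using the identification `Fin l ⊕ Fin (k−l) ≃ Fin k`. -/
def blockDiagId {k : ℕ} (l : ℕ) (h : l ≤ k)
    (Rr : Matrix (Fin (k - l)) (Fin (k - l)) ℝ) : Matrix (Fin k) (Fin k) ℝ :=
  Matrix.reindex (finSumFinEquiv.trans (finCongr (Nat.add_sub_cancel' h)))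
    (finSumFinEquiv.trans (finCongr (Nat.add_sub_cancel' h)))
    (Matrix.fromBlocks 1 0 0 Rr)

/-!
Since `Xᵀ Y Yᵀ X = U D² Uᵀ`, uniqueness of positive semidefinite square roots gives
`(Xᵀ Y Yᵀ X)^{1/2} = U D Uᵀ`. With `S = Vᵀ R U`, the equation `Xᵀ Y R = U D Uᵀ` becomes
`D S = D`, which says exactly that the first `l` rows of `S` are those of the identity.
Orthogonality of `S` then forces its first `l` columns to be identity columns as well
(`1 + CᵀC = 1` gives `C = 0`), so `S = [[I_l, 0], [0, Rr]]` with `Rr` orthogonal.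
-/

open scoped MatrixOrder in
theorem bwSqrt_eq_cfcSqrt {n k : ℕ} (X Y : Matrix (Fin n) (Fin k) ℝ) :
    bwSqrt X Y = CFC.sqrt (Xᵀ * Y * Yᵀ * X) := by
  rw [CFC.sqrt_eq_cfc, cfc_nnreal_eq_real _ _ (xtyytx_posSemidef X Y).nonneg,
    (xtyytx_posSemidef X Y).1.cfc_eq]
  simp [bwSqrt, IsHermitian.cfc, Function.comp_def, (xtyytx_posSemidef X Y).eigenvalues_nonneg]

theorem bwSqrt_eq_of_mul_self {n k : ℕ} {X Y : Matrix (Fin n) (Fin k) ℝ}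
    {S : Matrix (Fin k) (Fin k) ℝ} (hS : S.PosSemidef) (h : S * S = Xᵀ * Y * Yᵀ * X) :
    bwSqrt X Y = S := by
  open scoped MatrixOrder in
  rw [bwSqrt_eq_cfcSqrt, CFC.sqrt_unique h hS.nonneg]

theorem bwSqrt_eq_of_svd {n k : ℕ} {X Y : Matrix (Fin n) (Fin k) ℝ}
    {U V D : Matrix (Fin k) (Fin k) ℝ} (hU : Uᵀ * U = 1) (hV : Vᵀ * V = 1)
    (hD : D.PosSemidef) (hSVD : Xᵀ * Y = U * D * Vᵀ) :
    bwSqrt X Y = U * D * Uᵀ := by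
  have hDt : Dᵀ = D := hD.isHermitian
  have hYX : Yᵀ * X = V * D * Uᵀ := by
    rw [← transpose_transpose X, ← transpose_mul, hSVD]
    simp [transpose_mul, hDt, Matrix.mul_assoc]
  refine bwSqrt_eq_of_mul_self (by simpa using hD.mul_mul_conjTranspose_same U) ?_
  calc U * D * Uᵀ * (U * D * Uᵀ) = U * D * (Uᵀ * U) * D * Uᵀ := by
        simp only [Matrix.mul_assoc]
    _ = U * D * (Vᵀ * V) * D * Uᵀ := by rw [hU, hV]
    _ = Xᵀ * Y * (Yᵀ * X) := by rw [hSVD, hYX]; simp only [Matrix.mul_assoc]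
    _ = Xᵀ * Y * Yᵀ * X := by simp only [Matrix.mul_assoc]

section Orthogonal

variable {m α : Type*} [Fintype m] [DecidableEq m] [CommRing α] {U : Matrix m m α}

theorem mul_mul_transpose_mul_eq_iff (hU : Uᵀ * U = 1) (D V R : Matrix m m α) :
    U * D * Vᵀ * R = U * D * Uᵀ ↔ D * (Vᵀ * R * U) = D := by
  have hU' : U * Uᵀ = 1 := mul_eq_one_comm.mp hU
  constructor
  · intro h
    calc D * (Vᵀ * R * U) = Uᵀ * (U * D * Vᵀ * R) * U := by
          simp only [← Matrix.mul_assoc, hU, Matrix.one_mul]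
      _ = D := by
          rw [h]
          simp only [Matrix.mul_assoc, hU, Matrix.mul_one, ← Matrix.mul_assoc Uᵀ,
            Matrix.one_mul]
  · intro h
    calc U * D * Vᵀ * R = U * (D * (Vᵀ * R * U)) * Uᵀ := by
          simp only [Matrix.mul_assoc, hU', Matrix.mul_one]
      _ = U * D * Uᵀ := by rw [h]

theorem transpose_mul_mul_eq_iff {V : Matrix m m α} (hU : Uᵀ * U = 1) (hV : Vᵀ * V = 1)
    (R B : Matrix m m α) : Vᵀ * R * U = B ↔ R = V * B * Uᵀ := by
  have hU' : U * Uᵀ = 1 := mul_eq_one_comm.mp hU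
  have hV' : V * Vᵀ = 1 := mul_eq_one_comm.mp hV
  constructor
  · rintro rfl
    simp only [Matrix.mul_assoc, hU', Matrix.mul_one, ← Matrix.mul_assoc V, hV', Matrix.one_mul]
  · rintro rfl
    simp only [Matrix.mul_assoc, hU, Matrix.mul_one, ← Matrix.mul_assoc Vᵀ, hV, Matrix.one_mul]

end Orthogonal

section Blocks

variable {ι κ K : Type*} [Fintype ι] [DecidableEq ι]

theorem diagonal_mul_left_cancel [Field K] {d : ι → K} (hd : ∀ i, d i ≠ 0)
    {M N : Matrix ι κ K} :
    diagonal d * M = diagonal d * N ↔ M = N := by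
  refine ⟨fun h => ?_, congrArg _⟩
  ext i j
  simpa [diagonal_mul, hd i] using congrFun (congrFun h i) j

variable [Fintype κ]

theorem fromBlocks_diagonal_mul_eq_self_iff [Field K] {d : ι → K} (hd : ∀ i, d i ≠ 0)
    (S : Matrix (ι ⊕ κ) (ι ⊕ κ) K) :
    fromBlocks (diagonal d) 0 0 0 * S = fromBlocks (diagonal d) 0 0 0 ↔
      S.toBlocks₁₁ = 1 ∧ S.toBlocks₁₂ = 0 := by
  conv_lhs => rw [← fromBlocks_toBlocks S]
  rw [fromBlocks_multiply, fromBlocks_inj]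
  simp only [Matrix.zero_mul, add_zero, and_true]
  rw [← diagonal_mul_left_cancel hd (M := S.toBlocks₁₁) (N := 1),
    ← diagonal_mul_left_cancel hd (M := S.toBlocks₁₂) (N := 0), Matrix.mul_one,
    Matrix.mul_zero]

theorem eq_fromBlocks_one_of_transpose_mul_self [DecidableEq κ]
    {S : Matrix (ι ⊕ κ) (ι ⊕ κ) ℝ} (hS : Sᵀ * S = 1) (h₁₁ : S.toBlocks₁₁ = 1)
    (h₁₂ : S.toBlocks₁₂ = 0) :
    S.toBlocks₂₂ᵀ * S.toBlocks₂₂ = 1 ∧ S = fromBlocks 1 0 0 S.toBlocks₂₂ := by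
  rw [← fromBlocks_toBlocks S, h₁₁, h₁₂, fromBlocks_transpose, fromBlocks_multiply,
    ← fromBlocks_one, fromBlocks_inj] at hS
  simp only [transpose_one, transpose_zero, Matrix.one_mul, Matrix.zero_mul, zero_add,
    add_eq_left] at hS
  obtain ⟨hC, -, -, hE⟩ := hS
  have hC : S.toBlocks₂₁ = 0 := by
    rwa [← conjTranspose_eq_transpose_of_trivial, conjTranspose_mul_self_eq_zero] at hC
  refine ⟨hE, ?_⟩
  conv_lhs => rw [← fromBlocks_toBlocks S]
  rw [h₁₁, h₁₂, hC]

end Blocks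

def blockIndexEquiv {k : ℕ} (l : ℕ) (h : l ≤ k) : Fin l ⊕ Fin (k - l) ≃ Fin k :=
  finSumFinEquiv.trans (finCongr (Nat.add_sub_cancel' h))

@[simp]
theorem blockIndexEquiv_inl_val {k l : ℕ} (h : l ≤ k) (a : Fin l) :
    (blockIndexEquiv l h (.inl a) : ℕ) = a := by
  simp [blockIndexEquiv]

@[simp]
theorem blockIndexEquiv_inr_val {k l : ℕ} (h : l ≤ k) (b : Fin (k - l)) :
    (blockIndexEquiv l h (.inr b) : ℕ) = l + b := by
  simp [blockIndexEquiv]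

theorem blockDiagId_eq_reindex {k l : ℕ} (h : l ≤ k)
    (Rr : Matrix (Fin (k - l)) (Fin (k - l)) ℝ) :
    blockDiagId l h Rr =
      reindex (blockIndexEquiv l h) (blockIndexEquiv l h) (fromBlocks 1 0 0 Rr) :=
  rfl

theorem reindex_blockIndexEquiv_symm_eq_fromBlocks {k l : ℕ} (h : l ≤ k)
    {D : Matrix (Fin k) (Fin k) ℝ} (hD : D.IsDiag)
    (hzero : ∀ i : Fin k, l ≤ (i : ℕ) → D i i = 0) :
    reindex (blockIndexEquiv l h).symm (blockIndexEquiv l h).symm D =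
      fromBlocks (diagonal fun a => D (blockIndexEquiv l h (.inl a)) (blockIndexEquiv l h (.inl a)))
        0 0 0 := by
  conv_lhs => rw [← hD.diagonal_diag]
  rw [reindex_apply, Equiv.symm_symm, submatrix_diagonal_equiv, ← diagonal_zero,
    fromBlocks_diagonal]
  congr 1
  ext (a | b) <;> simp [hzero]

theorem mul_eq_self_iff_eq_blockDiagId {k l : ℕ} (h : l ≤ k) {D S : Matrix (Fin k) (Fin k) ℝ}
    (hD : D.IsDiag) (hne : ∀ i : Fin k, (i : ℕ) < l → D i i ≠ 0)
    (hzero : ∀ i : Fin k, l ≤ (i : ℕ) → D i i = 0) (hS : Sᵀ * S = 1) :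
    D * S = D ↔ ∃ Rr : Matrix (Fin (k - l)) (Fin (k - l)) ℝ,
      Rrᵀ * Rr = 1 ∧ S = blockDiagId l h Rr := by
  set φ := reindexAlgEquiv ℝ ℝ (blockIndexEquiv l h).symm
  have hφ : ∀ M, φ M = reindex (blockIndexEquiv l h).symm (blockIndexEquiv l h).symm M :=
    fun _ => rfl
  have hd : ∀ a : Fin l, D (blockIndexEquiv l h (.inl a)) (blockIndexEquiv l h (.inl a)) ≠ 0 :=
    fun a => hne _ (by simp)
  have hS' : (φ S)ᵀ * φ S = 1 := by
    rw [hφ, transpose_reindex, ← hφ, ← hφ, ← map_mul, hS, map_one]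
  rw [← φ.injective.eq_iff, map_mul, hφ D,
    reindex_blockIndexEquiv_symm_eq_fromBlocks h hD hzero, fromBlocks_diagonal_mul_eq_self_iff hd]
  constructor
  · rintro ⟨h₁₁, h₁₂⟩
    obtain ⟨hE, hblocks⟩ := eq_fromBlocks_one_of_transpose_mul_self hS' h₁₁ h₁₂
    refine ⟨_, hE, ?_⟩
    rw [blockDiagId_eq_reindex, ← hblocks]
    simp [hφ]
  · rintro ⟨Rr, -, rfl⟩
    simp [hφ, blockDiagId_eq_reindex]

/-- **Characterization of the Bures–Wasserstein logarithm index set via the SVD.** If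
`Xᵀ Y = U D Vᵀ` is a singular value decomposition with `D` diagonal, `D i i > 0` for `i < l`
and `D i i = 0` for `l ≤ i`, then an orthogonal `R` satisfies `Xᵀ Y R = (Xᵀ Y Yᵀ X)^{1/2}`
iff `R = V * [[I_l, 0], [0, Rr]] * Uᵀ` for some orthogonal `Rr` of size `r = k − l`. -/
theorem logarithm_index_characterization {n k : ℕ} (X Y : Matrix (Fin n) (Fin k) ℝ)
    (U V D : Matrix (Fin k) (Fin k) ℝ)
    (hU : Uᵀ * U = 1) (hV : Vᵀ * V = 1)
    (l : ℕ) (hl : l ≤ k)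
    (hdiag : ∀ i j : Fin k, i ≠ j → D i j = 0)
    (hpos : ∀ i : Fin k, (i : ℕ) < l → 0 < D i i)
    (hzero : ∀ i : Fin k, l ≤ (i : ℕ) → D i i = 0)
    (hSVD : Xᵀ * Y = U * D * Vᵀ)
    (R : Matrix (Fin k) (Fin k) ℝ) (hR : Rᵀ * R = 1) :
    Xᵀ * Y * R = bwSqrt X Y ↔
      ∃ Rr : Matrix (Fin (k - l)) (Fin (k - l)) ℝ,
        Rrᵀ * Rr = 1 ∧ R = V * blockDiagId l hl Rr * Uᵀ := by
  have hD : D.IsDiag := hdiag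
  have hDpsd : D.PosSemidef := by
    rw [← hD.diagonal_diag]
    refine posSemidef_diagonal_iff.mpr fun i => ?_
    rcases lt_or_ge (i : ℕ) l with hi | hi
    · exact (hpos i hi).le
    · exact (hzero i hi).ge
  have hS : (Vᵀ * R * U)ᵀ * (Vᵀ * R * U) = 1 := by
    simp_rw [← mem_orthogonalGroup_iff'] at hU hV hR ⊢
    exact mul_mem (mul_mem (transpose_mem_unitaryGroup_iff.mpr hV) hR) hU
  rw [bwSqrt_eq_of_svd hU hV hDpsd hSVD, hSVD, mul_mul_transpose_mul_eq_iff hU,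
    mul_eq_self_iff_eq_blockDiagId hl hD (fun i hi => (hpos i hi).ne') hzero hS]
  simp_rw [transpose_mul_mul_eq_iff hU hV]
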